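/- arXiv:2007.13282 — 4 statements merged into one kernel-verified Lean document; each statement's English description precedes it below -/
import Mathlib

section
/- For positive real numbers x_1, ..., x_n, equality holds in the inequality Σ_{i_1<...<i_k} x_{i_1}···x_{i_k} ≤ C(n,k)·((x_1+···+x_n)/n)^k (for some fixed k with 2 ≤ k ≤ n) if and only if x_1 = x_2 = ··· = x_n. -/
/-!
Induct on the multiset. Adjoining `b` to a multiset `t` of size `m` and mean `u`,
`e_{j+1}(b ::ₘ t) = e_{j+1}(t) + b e_j(t) ≤ C(m, j+1) u^(j+1) + b C(m, j) u^j`, and the right side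
is `C(m+1, j+1)` times the tangent line of `x ↦ x^(j+1)` at `u`, evaluated at the new mean. By
convexity (Bernoulli) this is at most `C(m+1, j+1)` times the new mean to the power `j+1`, strictly
unless `b = u` when `j ≥ 1`. So equality forces `b = u` together with equality for `t` in degrees
`j+1` and `j`, and by induction all the entries of `t` equal `u`.
-/

theorem pow_add_mul_lt_add_pow {a b : ℝ} (ha : 0 < a) (hab : 0 ≤ a + b) (hb : b ≠ 0) {n : ℕ}
    (hn : 2 ≤ n) : a ^ n + n * a ^ (n - 1) * b < (a + b) ^ n := by
  have hs : -1 ≤ b / a := by rw [le_div_iff₀ ha]; linarith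
  have key := one_add_mul_self_lt_rpow_one_add hs (div_ne_zero hb ha.ne')
    (p := n) (by exact_mod_cast hn)
  rw [Real.rpow_natCast, one_add_div ha.ne', div_pow, lt_div_iff₀ (by positivity)] at key
  obtain ⟨m, rfl⟩ : ∃ m, n = m + 1 := ⟨n - 1, by omega⟩
  calc a ^ (m + 1) + (m + 1 : ℕ) * a ^ (m + 1 - 1) * b
        = (1 + (m + 1 : ℕ) * (b / a)) * a ^ (m + 1) := by
          simp only [Nat.add_sub_cancel, pow_succ]; field_simp
    _ < _ := key

theorem choose_mul_pow_add_mul_eq (m j : ℕ) (u b : ℝ) :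
    (m.choose (j + 1) : ℝ) * u ^ (j + 1) + b * (m.choose j * u ^ j) =
      ((m + 1).choose (j + 1) : ℝ) *
        (u ^ (j + 1) + (j + 1 : ℕ) * u ^ j * ((m * u + b) / (m + 1) - u)) := by
  have hpascal : ((m + 1).choose (j + 1) : ℝ) = m.choose j + m.choose (j + 1) := by
    exact_mod_cast Nat.choose_succ_succ' m j
  have habsorb : ((m + 1).choose (j + 1) : ℝ) * (j + 1 : ℕ) = (m + 1) * m.choose j := by
    exact_mod_cast (Nat.add_one_mul_choose_eq m j).symm
  have hmean : (m + 1 : ℝ) * ((m * u + b) / (m + 1) - u) = b - u := by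
    field_simp; ring
  linear_combination (-u ^ (j + 1)) * hpascal - (u ^ j * ((m * u + b) / (m + 1) - u)) * habsorb
    - (m.choose j * u ^ j) * hmean

theorem choose_mul_pow_add_le (m j : ℕ) {u b : ℝ} (hu : 0 ≤ u) (hb : 0 ≤ b) :
    (m.choose (j + 1) : ℝ) * u ^ (j + 1) + b * (m.choose j * u ^ j) ≤
      ((m + 1).choose (j + 1) : ℝ) * ((m * u + b) / (m + 1)) ^ (j + 1) := by
  have hM : 0 ≤ (m * u + b) / (m + 1) := by positivity
  rw [choose_mul_pow_add_mul_eq]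
  gcongr
  simpa using pow_add_mul_le_add_pow hu (b := (m * u + b) / (m + 1) - u) (by linarith) (j + 1)

theorem choose_mul_pow_add_lt {m j : ℕ} (hj : 1 ≤ j) (hjm : j ≤ m) {u b : ℝ} (hu : 0 < u)
    (hb : 0 ≤ b) (hbu : b ≠ u) :
    (m.choose (j + 1) : ℝ) * u ^ (j + 1) + b * (m.choose j * u ^ j) <
      ((m + 1).choose (j + 1) : ℝ) * ((m * u + b) / (m + 1)) ^ (j + 1) := by
  have hM : 0 ≤ (m * u + b) / (m + 1) := by positivity
  have hMu : (m * u + b) / (m + 1) - u ≠ 0 := by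
    rw [sub_ne_zero, ne_eq, div_eq_iff (by positivity)]
    contrapose! hbu
    linarith
  rw [choose_mul_pow_add_mul_eq]
  gcongr
  · exact_mod_cast Nat.choose_pos (by omega)
  · simpa using pow_add_mul_lt_add_pow hu (by linarith) hMu (n := j + 1) (by omega)

namespace Multiset

theorem esymm_cons_succ {R : Type*} [CommSemiring R] (a : R) (s : Multiset R) (k : ℕ) :
    (a ::ₘ s).esymm (k + 1) = s.esymm (k + 1) + a * s.esymm k := by
  simp [esymm, powersetCard_cons, sum_map_mul_left]

theorem card_mul_sum_div_card (s : Multiset ℝ) : (card s : ℝ) * (s.sum / card s) = s.sum := by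
  rcases eq_or_ne s 0 with rfl | hs
  · simp
  · exact mul_div_cancel₀ _ (by simpa using hs)

theorem sum_cons_div_card_cons (a : ℝ) (s : Multiset ℝ) :
    (a ::ₘ s).sum / card (a ::ₘ s) = (card s * (s.sum / card s) + a) / (card s + 1) := by
  rw [card_mul_sum_div_card, sum_cons, card_cons, Nat.cast_succ, add_comm a]

theorem sum_div_card_pos {s : Multiset ℝ} (hs : ∀ y ∈ s, 0 < y) (hs0 : s ≠ 0) :
    0 < s.sum / card s := by
  have hsum := sum_lt_sum_of_nonempty (f := fun _ => (0 : ℝ)) (g := id) hs0 hs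
  rw [map_const', sum_replicate, nsmul_zero, map_id] at hsum
  exact div_pos hsum (by exact_mod_cast card_pos.mpr hs0)

theorem esymm_le_choose_mul_pow {s : Multiset ℝ} (hs : ∀ y ∈ s, 0 ≤ y) (k : ℕ) :
    s.esymm k ≤ (card s).choose k * (s.sum / card s) ^ k := by
  induction s using Multiset.induction_on generalizing k with
  | empty => cases k <;> simp [esymm, powersetCard_zero_right]
  | cons b t ih =>
    have hb : 0 ≤ b := hs b (mem_cons_self b t)
    have ht : ∀ y ∈ t, 0 ≤ y := fun y hy => hs y (mem_cons_of_mem hy)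
    cases k with
    | zero => simp [esymm]
    | succ j =>
      calc (b ::ₘ t).esymm (j + 1) = t.esymm (j + 1) + b * t.esymm j := esymm_cons_succ b t j
        _ ≤ (card t).choose (j + 1) * (t.sum / card t) ^ (j + 1) +
              b * ((card t).choose j * (t.sum / card t) ^ j) := by
          gcongr
          exacts [ih ht (j + 1), ih ht j]
        _ ≤ _ := by
          rw [sum_cons_div_card_cons, card_cons]
          exact_mod_cast choose_mul_pow_add_le (card t) j
            (div_nonneg (sum_nonneg ht) (by positivity)) hb

theorem eq_sum_div_card_of_esymm_eq {s : Multiset ℝ} (hs : ∀ y ∈ s, 0 < y) {k : ℕ} (hk : 2 ≤ k)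
    (hks : k ≤ card s) (heq : s.esymm k = (card s).choose k * (s.sum / card s) ^ k) :
    ∀ y ∈ s, y = s.sum / card s := by
  induction s using Multiset.induction_on generalizing k with
  | empty => rw [card_zero] at hks; omega
  | cons b t ih =>
    obtain ⟨j, rfl⟩ : ∃ j, k = j + 1 := ⟨k - 1, by omega⟩
    have hb : 0 < b := hs b (mem_cons_self b t)
    have ht : ∀ y ∈ t, 0 < y := fun y hy => hs y (mem_cons_of_mem hy)
    rw [card_cons] at hks
    have hupos := sum_div_card_pos ht (by rintro rfl; rw [card_zero] at hks; omega)
    have hE := esymm_le_choose_mul_pow (fun y hy => (ht y hy).le) (j + 1)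
    have hE' := esymm_le_choose_mul_pow (fun y hy => (ht y hy).le) j
    rw [esymm_cons_succ, sum_cons_div_card_cons, card_cons] at heq
    rw [sum_cons_div_card_cons]
    set m := card t with hm
    set u := t.sum / m with hu
    have hstep := choose_mul_pow_add_le m j hupos.le hb.le
    have hbE' := mul_le_mul_of_nonneg_left hE' hb.le
    have hbu : b = u := by
      by_contra hbu
      have := choose_mul_pow_add_lt (m := m) (j := j) (by omega) (by omega) hupos hb.le hbu
      linarith
    have hEeq : t.esymm (j + 1) = m.choose (j + 1) * u ^ (j + 1) := by linarith
    have hE'eq : t.esymm j = m.choose j * u ^ j :=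
      mul_left_cancel₀ hb.ne' (by linarith)
    have htu : ∀ y ∈ t, y = u := by
      rcases Nat.lt_or_ge j m with hjm | hjm
      · exact ih ht (k := j + 1) (by omega) hjm hEeq
      · rcases Nat.lt_or_ge j 2 with hj | hj
        · obtain ⟨c, rfl⟩ := card_eq_one.mp (show m = 1 by omega)
          simp [hu, hm]
        · exact ih ht hj (by omega) hE'eq
    have hmean : (m * u + b) / (m + 1) = b := by
      rw [hbu]; field_simp
    rw [hmean]
    intro y hy
    rcases mem_cons.mp hy with rfl | hy
    · rfl
    · rw [htu y hy, hbu]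

end Multiset

theorem stmt_4 (n k : ℕ) (hk1 : 2 ≤ k) (hkn : k ≤ n) (x : Fin n → ℝ)
    (hx : ∀ i, 0 < x i) :
    (∑ A ∈ Finset.powersetCard k (Finset.univ : Finset (Fin n)), ∏ i ∈ A, x i =
      (n.choose k : ℝ) * ((∑ i, x i) / n) ^ k) ↔ ∀ i j, x i = x j := by
  constructor
  · intro h i j
    have hconst := Multiset.eq_sum_div_card_of_esymm_eq (s := Finset.univ.val.map x)
      (by simpa using hx) hk1 (by simpa using hkn)
      (by rwa [Finset.esymm_map_val, Finset.sum_map_val, Multiset.card_map, Finset.card_val,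
        Finset.card_univ, Fintype.card_fin])
    rw [hconst (x i) (by simp), hconst (x j) (by simp)]
  · intro h
    obtain ⟨c, rfl⟩ : ∃ c, x = fun _ => c := ⟨x ⟨0, by omega⟩, funext fun i => h i _⟩
    rw [Finset.sum_congr rfl fun A hA => by
      rw [Finset.prod_const, Finset.mem_powersetCard_univ.mp hA]]
    simp [show n ≠ 0 by omega]
end

section
/- Let c and k be integers with 1 < c ≤ k and let ω ≥ k be an integer. Then C(ω-1, k-1) + C(ω-1, c-1) ≥ (ω-c+1)^(c-1)·(ω-k+1)^(k-c) / (k-1)! + (ω-c+1)^(c-1) / (c-1)!. -/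
lemma aux_desc (c k ω : ℕ) (hc : 1 ≤ c) (hck : c ≤ k) (hkω : k ≤ ω) :
    (ω - c + 1) ^ (c - 1) * (ω - k + 1) ^ (k - c) ≤ (ω - 1).descFactorial (k - 1) := by
  rw [Nat.descFactorial_eq_prod_range]
  have hk1 : k - 1 = (c - 1) + (k - c) := by omega
  rw [hk1, Finset.prod_range_add]
  apply Nat.mul_le_mul
  · calc (ω - c + 1) ^ (c - 1) = (ω - c + 1) ^ (Finset.range (c-1)).card := by
          rw [Finset.card_range]
      _ ≤ _ := Finset.pow_card_le_prod _ _ _ (fun i hi => by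
          simp only [Finset.mem_range] at hi; omega)
  · calc (ω - k + 1) ^ (k - c) = (ω - k + 1) ^ (Finset.range (k-c)).card := by
          rw [Finset.card_range]
      _ ≤ _ := Finset.pow_card_le_prod _ _ _ (fun i hi => by
          simp only [Finset.mem_range] at hi; omega)

lemma aux_real (c k ω : ℕ) (hc : 1 ≤ c) (hck : c ≤ k) (hkω : k ≤ ω) :
    ((ω - c + 1 : ℕ) ^ (c - 1) * (ω - k + 1 : ℕ) ^ (k - c) : ℝ) / ((k - 1).factorial : ℝ)
      ≤ ((ω - 1).choose (k - 1) : ℝ) := by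
  rw [div_le_iff₀ (by positivity)]
  have h := aux_desc c k ω hc hck hkω
  rw [Nat.descFactorial_eq_factorial_mul_choose] at h
  exact_mod_cast (by linarith [Nat.cast_le (α := ℝ) |>.mpr h] : _)

theorem stmt_5 (c k ω : ℕ) (hc : 1 < c) (hck : c ≤ k) (hkω : k ≤ ω) :
    ((ω - 1).choose (k - 1) : ℝ) + ((ω - 1).choose (c - 1) : ℝ) ≥
      ((ω : ℝ) - c + 1) ^ (c - 1) * ((ω : ℝ) - k + 1) ^ (k - c) / ((k - 1).factorial : ℝ) +
        ((ω : ℝ) - c + 1) ^ (c - 1) / ((c - 1).factorial : ℝ) := by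
  have hcω : c ≤ ω := hck.trans hkω
  have e1 : ((ω : ℝ) - c + 1) = ((ω - c + 1 : ℕ) : ℝ) := by
    push_cast [Nat.cast_sub hcω]; ring
  have e2 : ((ω : ℝ) - k + 1) = ((ω - k + 1 : ℕ) : ℝ) := by
    push_cast [Nat.cast_sub hkω]; ring
  rw [e1, e2]
  have h1 := aux_real c k ω hc.le hck hkω
  have h2 := aux_real c c ω hc.le le_rfl hcω
  push_cast at h1 h2 ⊢
  simp only [Nat.sub_self, pow_zero, mul_one] at h2
  linarith
end

section
/- Let G be a graph (2-uniform hypergraph) with signless Laplacian matrix Q = D + A and clique number ω. Then the largest eigenvalue q(G) of Q satisfies q(G) ≥ 2(ω - 1). -/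
/-!
Let `K` be a maximum clique and `x` its indicator vector. Every vertex of `K` has exactly
`ω - 1` neighbours inside `K`, hence degree at least `ω - 1`, so `xᵀ Q x ≥ 2 ω (ω - 1)`, while
`xᵀ x = ω`. Diagonalising `Q` gives the Rayleigh bound `xᵀ Q x ≤ q(G) xᵀ x`.
-/

open Matrix Finset

namespace Matrix.IsHermitian

variable {ι : Type*} [Fintype ι] [DecidableEq ι] {M : Matrix ι ι ℝ} (hM : M.IsHermitian)

theorem eigenvectorUnitary_mul_transpose :
    (hM.eigenvectorUnitary : Matrix ι ι ℝ) * (hM.eigenvectorUnitary : Matrix ι ι ℝ)ᵀ = 1 := by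
  simpa [star_eq_conjTranspose] using Unitary.coe_mul_star_self hM.eigenvectorUnitary

theorem dotProduct_mulVec_eq_sum_eigenvalues (x : ι → ℝ) :
    x ⬝ᵥ (M *ᵥ x) =
      ∑ i, hM.eigenvalues i * ((hM.eigenvectorUnitary : Matrix ι ι ℝ)ᵀ *ᵥ x) i ^ 2 := by
  conv_lhs => rw [hM.spectral_theorem, Unitary.conjStarAlgAut_apply]
  rw [star_eq_conjTranspose, conjTranspose_eq_transpose_of_trivial, ← mulVec_mulVec,
    ← mulVec_mulVec, dotProduct_mulVec, ← mulVec_transpose]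
  simp only [dotProduct, mulVec_diagonal, Function.comp_apply, RCLike.ofReal_real_eq_id, id, sq]
  exact sum_congr rfl fun i _ => by ring

theorem dotProduct_transpose_eigenvectorUnitary_mulVec (x : ι → ℝ) :
    ((hM.eigenvectorUnitary : Matrix ι ι ℝ)ᵀ *ᵥ x) ⬝ᵥ
      ((hM.eigenvectorUnitary : Matrix ι ι ℝ)ᵀ *ᵥ x) = x ⬝ᵥ x := by
  rw [dotProduct_mulVec, ← mulVec_transpose, transpose_transpose, mulVec_mulVec,
    eigenvectorUnitary_mul_transpose, one_mulVec]

theorem dotProduct_mulVec_le_iSup_eigenvalues_mul (x : ι → ℝ) :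
    x ⬝ᵥ (M *ᵥ x) ≤ (⨆ i, hM.eigenvalues i) * (x ⬝ᵥ x) := by
  set y := (hM.eigenvectorUnitary : Matrix ι ι ℝ)ᵀ *ᵥ x
  have hle i : hM.eigenvalues i ≤ ⨆ j, hM.eigenvalues j :=
    le_ciSup (Set.finite_range _).bddAbove i
  calc x ⬝ᵥ (M *ᵥ x)
      = ∑ i, hM.eigenvalues i * y i ^ 2 := hM.dotProduct_mulVec_eq_sum_eigenvalues x
    _ ≤ ∑ i, (⨆ j, hM.eigenvalues j) * y i ^ 2 := by gcongr with i; exact hle i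
    _ = (⨆ i, hM.eigenvalues i) * (x ⬝ᵥ x) := by
      rw [← hM.dotProduct_transpose_eigenvectorUnitary_mulVec x, ← mul_sum]
      simp only [dotProduct, sq, y]

end Matrix.IsHermitian

namespace SimpleGraph

variable {V : Type*} [Fintype V] [DecidableEq V] (G : SimpleGraph V) [DecidableRel G.Adj]

def signlessLapMatrix (R : Type*) [AddMonoidWithOne R] : Matrix V V R :=
  G.degMatrix R + G.adjMatrix R

variable {R : Type*} [CommSemiring R] (s : Finset V)

theorem indicator_dotProduct_degMatrix_mulVec_indicator :
    (s : Set V).indicator 1 ⬝ᵥ (G.degMatrix R *ᵥ (s : Set V).indicator 1) =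
      ∑ i ∈ s, (G.degree i : R) := by
  simp [dotProduct_mulVec_degMatrix, Set.indicator_apply, sum_ite_mem]

theorem indicator_dotProduct_adjMatrix_mulVec_indicator :
    (s : Set V).indicator 1 ⬝ᵥ (G.adjMatrix R *ᵥ (s : Set V).indicator 1) =
      ∑ i ∈ s, (#(G.neighborFinset i ∩ s) : R) := by
  simp [dotProduct, adjMatrix_mulVec_apply, Set.indicator_apply, sum_ite_mem]

theorem two_mul_sum_card_neighborFinset_inter_le :
    2 * ∑ i ∈ s, (#(G.neighborFinset i ∩ s) : ℝ) ≤
      (s : Set V).indicator 1 ⬝ᵥ (G.signlessLapMatrix ℝ *ᵥ (s : Set V).indicator 1) := by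
  rw [signlessLapMatrix, add_mulVec, dotProduct_add,
    indicator_dotProduct_degMatrix_mulVec_indicator,
    indicator_dotProduct_adjMatrix_mulVec_indicator, two_mul]
  gcongr with i
  exact_mod_cast card_le_card inter_subset_left

variable {G s}

theorem IsClique.neighborFinset_inter_eq_erase (hs : G.IsClique (s : Set V)) {i : V}
    (hi : i ∈ s) :
    G.neighborFinset i ∩ s = s.erase i := by
  ext j
  simp only [mem_inter, mem_neighborFinset, mem_erase]
  exact ⟨fun ⟨hij, hj⟩ => ⟨hij.ne', hj⟩, fun ⟨hji, hj⟩ => ⟨hs hi hj hji.symm, hj⟩⟩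

theorem IsNClique.sum_card_neighborFinset_inter {n : ℕ} (hs : G.IsNClique n s) :
    ∑ i ∈ s, #(G.neighborFinset i ∩ s) = n * (n - 1) := by
  rw [sum_congr rfl fun i hi => by rw [hs.isClique.neighborFinset_inter_eq_erase hi,
    card_erase_of_mem hi, hs.card_eq], sum_const, hs.card_eq, smul_eq_mul]

theorem IsNClique.two_mul_sub_one_le_iSup_eigenvalues {n : ℕ} (hs : G.IsNClique n s)
    (hn : 0 < n) (hQ : (G.signlessLapMatrix ℝ).IsHermitian) :
    2 * ((n : ℝ) - 1) ≤ ⨆ i, hQ.eigenvalues i := by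
  set x : V → ℝ := (s : Set V).indicator 1
  have hxx : x ⬝ᵥ x = n := by
    simp [x, dotProduct, Set.indicator_apply, hs.card_eq]
  have hquad : 2 * ((n : ℝ) - 1) * n ≤ x ⬝ᵥ (G.signlessLapMatrix ℝ *ᵥ x) := by
    have := G.two_mul_sum_card_neighborFinset_inter_le s
    rw [← Nat.cast_sum, hs.sum_card_neighborFinset_inter, Nat.cast_mul, Nat.cast_pred hn] at this
    linarith
  have hray := hQ.dotProduct_mulVec_le_iSup_eigenvalues_mul x
  rw [hxx] at hray
  exact le_of_mul_le_mul_right (hquad.trans hray) (Nat.cast_pos.2 hn)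

end SimpleGraph

theorem SimpleGraph.cliqueNum_pos {V : Type*} [Finite V] [Nonempty V] (G : SimpleGraph V) :
    0 < G.cliqueNum := by
  obtain ⟨v⟩ := ‹Nonempty V›
  exact (singleton_nonempty v).card_pos.trans_le (IsClique.card_le_cliqueNum (tc := by simp))

theorem stmt_14 (n : ℕ) (G : SimpleGraph (Fin n)) [DecidableRel G.Adj]
    (hQ : (G.degMatrix ℝ + G.adjMatrix ℝ).IsHermitian) :
    (⨆ i, hQ.eigenvalues i) ≥ 2 * ((G.cliqueNum : ℝ) - 1) := by
  obtain ⟨s, hs⟩ := G.exists_isNClique_cliqueNum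
  rcases isEmpty_or_nonempty (Fin n) with hV | hV
  -- on `Fin 0` the supremum is the junk value `0 ≥ -2`
  · have hω : G.cliqueNum = 0 := by simpa [eq_empty_of_isEmpty s] using hs.card_eq.symm
    simp [hω]
  · exact hs.two_mul_sub_one_le_iSup_eigenvalues G.cliqueNum_pos hQ
end

section
/- Let G be a finite simple graph with n vertices and clique number ω, and let L(G) = max over nonnegative vectors x with Σx_i = 1 of Σ_{{i,j}∈E(G)} x_i x_j. Then L(G) = (1/2)(1 - 1/ω). -/
open Finset

namespace MSaux

variable {n : ℕ}

/-- adjacency indicator -/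
def qa (G : SimpleGraph (Fin n)) [DecidableRel G.Adj] (i j : Fin n) : ℝ :=
  if G.Adj i j then 1 else 0

/-- the quadratic/bilinear form -/
def quadB (G : SimpleGraph (Fin n)) [DecidableRel G.Adj] (x y : Fin n → ℝ) : ℝ :=
  ∑ i, ∑ j, qa G i j * x i * y j

variable {G : SimpleGraph (Fin n)} [DecidableRel G.Adj]

lemma qa_symm (i j : Fin n) : qa G i j = qa G j i := by
  simp [qa, G.adj_comm]

lemma quad_eq (x : Fin n → ℝ) :
    (∑ i, ∑ j, if G.Adj i j then x i * x j else 0) = quadB G x x := by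
  unfold quadB qa
  refine Finset.sum_congr rfl fun i _ => Finset.sum_congr rfl fun j _ => ?_
  split_ifs <;> simp

lemma quadB_expand (x d : Fin n → ℝ) :
    quadB G (fun i => x i + d i) (fun i => x i + d i)
      = quadB G x x + quadB G x d + quadB G d x + quadB G d d := by
  unfold quadB
  have h : ∀ i j, qa G i j * (x i + d i) * (x j + d j)
      = qa G i j * x i * x j + qa G i j * x i * d j
        + (qa G i j * d i * x j + qa G i j * d i * d j) := fun i j => by ring
  simp_rw [h, Finset.sum_add_distrib]
  ring

/-- The shifting identity: moving the weight of `v` onto a non-adjacent `u`. -/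
lemma shift_identity (x : Fin n → ℝ) (u v : Fin n) (huv : u ≠ v) (hna : ¬ G.Adj u v) :
    quadB G (fun i => x i + ((if i = u then x v else 0) - (if i = v then x v else 0)))
        (fun i => x i + ((if i = u then x v else 0) - (if i = v then x v else 0)))
      = quadB G x x
        + 2 * x v * ((∑ i, qa G i u * x i) - (∑ i, qa G i v * x i)) := by
  set d : Fin n → ℝ := fun i => (if i = u then x v else 0) - (if i = v then x v else 0) with hd
  rw [quadB_expand]
  have hxd : quadB G x d = x v * ((∑ i, qa G i u * x i) - (∑ i, qa G i v * x i)) := by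
    unfold quadB
    simp only [hd, mul_sub, mul_ite, mul_zero, Finset.sum_sub_distrib,
      Finset.sum_ite_eq', Finset.mem_univ, if_true]
    rw [Finset.mul_sum, Finset.mul_sum]
    congr 1 <;> exact Finset.sum_congr rfl fun i _ => by ring
  have hdx : quadB G d x = x v * ((∑ i, qa G i u * x i) - (∑ i, qa G i v * x i)) := by
    unfold quadB
    rw [Finset.sum_comm]
    simp only [hd]
    have h : ∀ j i, qa G i j * ((if i = u then x v else 0) - (if i = v then x v else 0)) * x j
        = qa G j i * x j * ((if i = u then x v else 0) - (if i = v then x v else 0)) := by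
      intro j i; rw [qa_symm]; ring
    simp_rw [h]
    simp only [mul_sub, mul_ite, mul_zero, Finset.sum_sub_distrib,
      Finset.sum_ite_eq', Finset.mem_univ, if_true]
    rw [Finset.mul_sum, Finset.mul_sum]
    congr 1 <;> exact Finset.sum_congr rfl fun i _ => by ring
  have hdd : quadB G d d = 0 := by
    have h1 : qa G u u = 0 := by simp [qa]
    have h2 : qa G v v = 0 := by simp [qa]
    have h3 : qa G u v = 0 := by simp [qa, hna]
    have h4 : qa G v u = 0 := by rw [qa_symm]; exact h3
    unfold quadB
    simp only [hd, mul_sub, sub_mul, mul_ite, mul_zero, ite_mul, zero_mul,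
      Finset.sum_sub_distrib, Finset.sum_ite_eq', Finset.mem_univ, if_true,
      h1, h2, h3, h4]
    ring
  rw [hxd, hdx, hdd]; ring


lemma quad_le_one_sub_sumsq (x : Fin n → ℝ) (hx : ∀ i, 0 ≤ x i) (hsum : ∑ i, x i = 1) :
    quadB G x x ≤ 1 - ∑ i, x i * x i := by
  have h1 : quadB G x x ≤ ∑ i, ∑ j, (x i * x j - if i = j then x i * x j else 0) := by
    refine Finset.sum_le_sum fun i _ => Finset.sum_le_sum fun j _ => ?_
    unfold qa
    by_cases h : G.Adj i j
    · have : i ≠ j := G.ne_of_adj h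
      simp [h, this]
    · have := mul_nonneg (hx i) (hx j)
      simp only [h, if_false, zero_mul]
      split_ifs <;> linarith
  calc quadB G x x ≤ _ := h1
    _ = 1 - ∑ i, x i * x i := by
        simp_rw [Finset.sum_sub_distrib, Finset.sum_ite_eq, Finset.mem_univ, if_true,
          ← Finset.mul_sum, hsum, mul_one]
        rw [hsum]

lemma clique_bound (hω : 1 ≤ G.cliqueNum) (s : Finset (Fin n)) (hclique : G.IsClique ↑s)
    (x : Fin n → ℝ) (hx : ∀ i, 0 ≤ x i) (hxs : ∀ i ∉ s, x i = 0) (hsum : ∑ i, x i = 1) :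
    quadB G x x ≤ 1 - 1 / (G.cliqueNum : ℝ) := by
  have hcard : s.card ≤ G.cliqueNum := SimpleGraph.IsClique.card_le_cliqueNum (tc := hclique)
  have hsum_s : ∑ i ∈ s, x i = 1 := by
    rw [← hsum]
    exact (Finset.sum_subset (Finset.subset_univ s) (fun i _ hi => hxs i hi))
  have hcs : 1 ≤ (s.card : ℝ) * ∑ i ∈ s, x i ^ 2 := by
    have := sq_sum_le_card_mul_sum_sq (s := s) (f := x)
    rw [hsum_s] at this
    simpa using this
  have hsq : ∑ i ∈ s, x i ^ 2 ≤ ∑ i, x i ^ 2 :=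
    Finset.sum_le_sum_of_subset_of_nonneg (Finset.subset_univ s) fun i _ _ => sq_nonneg _
  have hωpos : (0:ℝ) < (G.cliqueNum : ℝ) := by
    have : (0:ℕ) < G.cliqueNum := lt_of_lt_of_le one_pos hω
    exact_mod_cast this
  have hsnonneg : (0:ℝ) ≤ ∑ i ∈ s, x i ^ 2 := Finset.sum_nonneg fun i _ => sq_nonneg _
  have hcard' : (s.card : ℝ) ≤ (G.cliqueNum : ℝ) := by exact_mod_cast hcard
  have key : 1 / (G.cliqueNum : ℝ) ≤ ∑ i, x i * x i := by
    rw [div_le_iff₀ hωpos] at *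
    have h2 : 1 ≤ (G.cliqueNum : ℝ) * ∑ i ∈ s, x i ^ 2 := by
      calc (1:ℝ) ≤ (s.card : ℝ) * ∑ i ∈ s, x i ^ 2 := hcs
        _ ≤ (G.cliqueNum : ℝ) * ∑ i ∈ s, x i ^ 2 := by
            exact mul_le_mul_of_nonneg_right hcard' hsnonneg
    have h3 : (G.cliqueNum : ℝ) * ∑ i ∈ s, x i ^ 2 ≤ (G.cliqueNum : ℝ) * ∑ i, x i ^ 2 :=
      mul_le_mul_of_nonneg_left hsq (le_of_lt hωpos)
    have h4 : ∑ i, x i ^ 2 = ∑ i, x i * x i := by simp [sq]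
    nlinarith
  have := quad_le_one_sub_sumsq (G := G) x hx hsum
  linarith

lemma shift_step (s : Finset (Fin n)) (x : Fin n → ℝ) (hx : ∀ i, 0 ≤ x i)
    (hxs : ∀ i ∉ s, x i = 0) (hsum : ∑ i, x i = 1) (u v : Fin n) (hu : u ∈ s) (hv : v ∈ s)
    (huv : u ≠ v) (hna : ¬G.Adj u v)
    (hS : ∑ i, qa G i v * x i ≤ ∑ i, qa G i u * x i) :
    ∃ x' : Fin n → ℝ, (∀ i, 0 ≤ x' i) ∧ (∀ i ∉ s.erase v, x' i = 0) ∧ (∑ i, x' i = 1) ∧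
      quadB G x x ≤ quadB G x' x' := by
  refine ⟨fun i => x i + ((if i = u then x v else 0) - (if i = v then x v else 0)),
    ?_, ?_, ?_, ?_⟩
  · intro i
    by_cases h : i = u
    · subst h
      simp only [if_true, if_neg huv]
      have := hx i; have := hx v; linarith
    · by_cases h' : i = v
      · subst h'
        simp only [if_neg h, if_true]
        linarith [hx i]
      · simp only [if_neg h, if_neg h']
        simpa using hx i
  · intro i hi
    rw [Finset.mem_erase] at hi
    push_neg at hi
    by_cases h' : i = v
    · subst h'
      simp [Ne.symm huv]
    · have his : i ∉ s := hi h'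
      have h : i ≠ u := fun hh => his (hh ▸ hu)
      simp [if_neg h, if_neg h', hxs i his]
  · rw [Finset.sum_add_distrib, Finset.sum_sub_distrib, Finset.sum_ite_eq',
      Finset.sum_ite_eq', hsum]
    simp
  · rw [shift_identity x u v huv hna]
    have h1 : 0 ≤ 2 * x v * ((∑ i, qa G i u * x i) - (∑ i, qa G i v * x i)) := by
      have := hx v
      have h2 : 0 ≤ (∑ i, qa G i u * x i) - (∑ i, qa G i v * x i) := by linarith
      positivity
    linarith

lemma upper_bound (hω : 1 ≤ G.cliqueNum) (k : ℕ) :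
    ∀ (s : Finset (Fin n)) (x : Fin n → ℝ), s.card ≤ k → (∀ i, 0 ≤ x i) →
      (∀ i ∉ s, x i = 0) → (∑ i, x i = 1) → quadB G x x ≤ 1 - 1 / (G.cliqueNum : ℝ) := by
  induction k with
  | zero =>
    intro s x hcard hx hxs hsum
    have hs : s = ∅ := Finset.card_eq_zero.mp (Nat.le_zero.mp hcard)
    subst hs
    exact clique_bound hω ∅ (by simp) x hx hxs hsum
  | succ k ih =>
    intro s x hcard hx hxs hsum
    by_cases hcl : G.IsClique ↑s
    · exact clique_bound hω s hcl x hx hxs hsum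
    · rw [SimpleGraph.isClique_iff, Set.Pairwise] at hcl
      push_neg at hcl
      obtain ⟨u, hu, v, hv, huv, hna⟩ := hcl
      have hu' : u ∈ s := hu
      have hv' : v ∈ s := hv
      have hcard' : ∀ w ∈ s, (s.erase w).card ≤ k := by
        intro w hw
        rw [Finset.card_erase_of_mem hw]
        omega
      rcases le_total (∑ i, qa G i v * x i) (∑ i, qa G i u * x i) with hS | hS
      · obtain ⟨x', h1, h2, h3, h4⟩ := shift_step s x hx hxs hsum u v hu' hv' huv hna hS
        exact h4.trans (ih (s.erase v) x' (hcard' v hv') h1 h2 h3)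
      · obtain ⟨x', h1, h2, h3, h4⟩ := shift_step s x hx hxs hsum v u hv' hu' huv.symm
          (fun h => hna h.symm) hS
        exact h4.trans (ih (s.erase u) x' (hcard' u hu') h1 h2 h3)

end MSaux


theorem stmt_15 (n : ℕ) (hn : 0 < n) (G : SimpleGraph (Fin n)) [DecidableRel G.Adj] :
    IsGreatest
      {y : ℝ | ∃ x : Fin n → ℝ, (∀ i, 0 ≤ x i) ∧ (∑ i, x i = 1) ∧
        y = (1 / 2) * ∑ i, ∑ j, if G.Adj i j then x i * x j else 0}
      ((1 / 2) * (1 - 1 / (G.cliqueNum : ℝ))) := by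
  have hω : 1 ≤ G.cliqueNum := by
    have i : Fin n := ⟨0, hn⟩
    have hcl : G.IsClique (↑({i} : Finset (Fin n))) := by
      simp [SimpleGraph.isClique_iff, Set.pairwise_singleton]
    have := SimpleGraph.IsClique.card_le_cliqueNum (tc := hcl)
    simpa using this
  have hωpos : (0:ℝ) < (G.cliqueNum : ℝ) := by
    have : (0:ℕ) < G.cliqueNum := lt_of_lt_of_le one_pos hω
    exact_mod_cast this
  constructor
  · -- membership: uniform weight on a maximum clique
    obtain ⟨t, ht⟩ := G.exists_isNClique_cliqueNum
    set c : ℝ := (G.cliqueNum : ℝ) with hc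
    set x : Fin n → ℝ := fun i => if i ∈ t then 1 / c else 0 with hxdef
    have hcardt : (t.card : ℝ) = c := by rw [hc]; exact_mod_cast ht.card_eq
    have hsum : ∑ i, x i = 1 := by
      rw [hxdef]
      rw [Finset.sum_ite_mem, Finset.univ_inter, Finset.sum_const, nsmul_eq_mul, hcardt]
      field_simp
    refine ⟨x, ?_, hsum, ?_⟩
    · intro i
      rw [hxdef]
      dsimp only
      split_ifs with h
      · positivity
      · exact le_refl 0
    · congr 1
      have key : ∀ i j, (if G.Adj i j then x i * x j else 0)
          = x i * x j - (if i = j then x i * x j else 0) := by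
        intro i j
        by_cases hij : i = j
        · subst hij
          simp [SimpleGraph.irrefl]
        · by_cases hi : i ∈ t
          · by_cases hj : j ∈ t
            · have hadj : G.Adj i j := ht.isClique (Finset.mem_coe.mpr hi)
                (Finset.mem_coe.mpr hj) hij
              simp [hadj, hij]
            · have : x j = 0 := by rw [hxdef]; simp [hj]
              simp [this, hij]
          · have : x i = 0 := by rw [hxdef]; simp [hi]
            simp [this, hij]
      have hdiag : ∑ i, x i * x i = 1 / c := by
        have : ∀ i, x i * x i = if i ∈ t then 1 / c * (1 / c) else 0 := by
          intro i; rw [hxdef]; dsimp only; split_ifs <;> simp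
        simp_rw [this]
        rw [Finset.sum_ite_mem, Finset.univ_inter, Finset.sum_const, nsmul_eq_mul, hcardt]
        field_simp
      calc (1 - 1 / c)
          = 1 - ∑ i, x i * x i := by rw [hdiag]
        _ = ∑ i, ∑ j, (x i * x j - if i = j then x i * x j else 0) := by
            simp_rw [Finset.sum_sub_distrib, Finset.sum_ite_eq, Finset.mem_univ, if_true,
              ← Finset.mul_sum, hsum, mul_one]
            rw [hsum]
        _ = ∑ i, ∑ j, if G.Adj i j then x i * x j else 0 := by
            exact (Finset.sum_congr rfl fun i _ => Finset.sum_congr rfl fun j _ =>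
              (key i j).symm)
  · -- upper bound
    rintro y ⟨x, hx, hsum, rfl⟩
    rw [MSaux.quad_eq]
    have := MSaux.upper_bound (G := G) hω (Finset.univ.card) Finset.univ x le_rfl hx
      (fun i hi => absurd (Finset.mem_univ i) hi) hsum
    linarith
end
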